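/- There exists a sequence of lattice triangles whose sorted normalized side-length triples converge to (2/3, 2/3, 2/3), the point of the moduli space representing the equilateral triangle; equivalently, (2/3, 2/3, 2/3) is an accumulation point of the set of sorted normalized side-length triples of lattice triangles. -/

import Mathlib

open Filter

/-- The canonical embedding of `ℤ²` into the Euclidean plane. -/
noncomputable def latticePt (p : ℤ × ℤ) : EuclideanSpace ℝ (Fin 2) :=
  WithLp.toLp 2 ![(p.1 : ℝ), (p.2 : ℝ)]

/-- The rearrangement of a triple of reals in nondecreasing order. -/
noncomputable def sort3 (u v w : ℝ) : ℝ × ℝ × ℝ :=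
  (min u (min v w), u + v + w - min u (min v w) - max u (max v w),
    max u (max v w))

/-- The sorted normalized side-length triple of a triangle with vertices
`A, B, C`: the side lengths divided by the semi-perimeter, sorted in
nondecreasing order. -/
noncomputable def sortedNormTriple (A B C : EuclideanSpace ℝ (Fin 2)) :
    ℝ × ℝ × ℝ :=
  let s : ℝ := (‖B - A‖ + ‖C - B‖ + ‖A - C‖) / 2
  sort3 (‖B - A‖ / s) (‖C - B‖ / s) (‖A - C‖ / s)

/-! The normalized side-length triple is invariant under scaling and continuous away from
degenerate triangles. The isosceles lattice triangles with vertices `(0, 0)`, `(2m, 0)` and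
`(m, ⌊m√3⌋)`, scaled by `1/m`, converge to the equilateral triangle `(0, 0)`, `(2, 0)`, `(1, √3)`,
whose triple is `(2/3, 2/3, 2/3)`. -/

theorem Filter.Tendsto.sort3 {α : Type*} {l : Filter α} {f g h : α → ℝ} {a b c : ℝ}
    (hf : Tendsto f l (nhds a)) (hg : Tendsto g l (nhds b)) (hh : Tendsto h l (nhds c)) :
    Tendsto (fun x => sort3 (f x) (g x) (h x)) l (nhds (sort3 a b c)) :=
  (hf.min (hg.min hh)).prodMk_nhds
    (((((hf.add hg).add hh).sub (hf.min (hg.min hh))).sub (hf.max (hg.max hh))).prodMk_nhds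
      (hf.max (hg.max hh)))

theorem sortedNormTriple_smul {c : ℝ} (hc : c ≠ 0) (A B C : EuclideanSpace ℝ (Fin 2)) :
    sortedNormTriple (c • A) (c • B) (c • C) = sortedNormTriple A B C := by
  have hc' : 0 < |c| := abs_pos.mpr hc
  simp only [sortedNormTriple, ← smul_sub, norm_smul, Real.norm_eq_abs, ← mul_add,
    mul_div_assoc, mul_div_mul_left _ _ hc'.ne']

theorem Filter.Tendsto.sortedNormTriple {α : Type*} {l : Filter α}
    {A B C : α → EuclideanSpace ℝ (Fin 2)} {P Q R : EuclideanSpace ℝ (Fin 2)}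
    (hA : Tendsto A l (nhds P)) (hB : Tendsto B l (nhds Q)) (hC : Tendsto C l (nhds R))
    (hPQ : P ≠ Q) :
    Tendsto (fun x => sortedNormTriple (A x) (B x) (C x)) l
      (nhds (sortedNormTriple P Q R)) := by
  have hs : (‖Q - P‖ + ‖R - Q‖ + ‖P - R‖) / 2 ≠ 0 := by
    have : 0 < ‖Q - P‖ := norm_pos_iff.mpr (sub_ne_zero.mpr hPQ.symm)
    positivity
  have hAB := (hB.sub hA).norm
  have hBC := (hC.sub hB).norm
  have hCA := (hA.sub hC).norm
  have hsum := ((hAB.add hBC).add hCA).div_const 2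
  exact (hAB.div hsum hs).sort3 (hBC.div hsum hs) (hCA.div hsum hs)

theorem sortedNormTriple_of_norm_eq {A B C : EuclideanSpace ℝ (Fin 2)} {d : ℝ} (hd : d ≠ 0)
    (hAB : ‖B - A‖ = d) (hBC : ‖C - B‖ = d) (hCA : ‖A - C‖ = d) :
    sortedNormTriple A B C = (2/3, 2/3, 2/3) := by
  have : d / ((d + d + d) / 2) = 2 / 3 := by field_simp; ring
  simp only [sortedNormTriple, hAB, hBC, hCA, this, sort3, min_self, max_self]
  norm_num

theorem not_collinear_latticePt {a b k : ℤ} (ha : a ≠ 0) (hk : k ≠ 0) :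
    ¬ Collinear ℝ ({latticePt (0, 0), latticePt (a, 0), latticePt (b, k)} :
      Set (EuclideanSpace ℝ (Fin 2))) := by
  rw [collinear_iff_of_mem (Set.mem_insert _ _)]
  rintro ⟨v, hv⟩
  obtain ⟨r, hr⟩ := hv (latticePt (a, 0)) (by simp)
  obtain ⟨s, hs⟩ := hv (latticePt (b, k)) (by simp)
  have hr0 := congrArg (· 0) hr
  have hr1 := congrArg (· 1) hr
  have hs1 := congrArg (· 1) hs
  simp only [latticePt, Int.cast_zero, vadd_eq_add, PiLp.add_apply, PiLp.smul_apply,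
    smul_eq_mul, add_zero, Matrix.cons_val_zero, Matrix.cons_val_one, Matrix.cons_val_fin_one,
    zero_eq_mul] at hr0 hr1 hs1
  rcases hr1 with rfl | hv1
  · exact ha (by exact_mod_cast hr0.trans (zero_mul _))
  · rw [hv1, mul_zero] at hs1
    exact hk (by exact_mod_cast hs1)

theorem tendsto_toLp_pair {α : Type*} {l : Filter α} {f g : α → ℝ} {a b : ℝ}
    (hf : Tendsto f l (nhds a)) (hg : Tendsto g l (nhds b)) :
    Tendsto (fun x => !₂[f x, g x]) l (nhds !₂[a, b]) := by
  refine (PiLp.continuous_toLp 2 _).continuousAt.tendsto.comp (tendsto_pi_nhds.mpr ?_)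
  intro i
  fin_cases i <;> simpa

theorem tendsto_nat_floor_mul_div_succ {a : ℝ} (ha : 0 ≤ a) :
    Tendsto (fun n : ℕ => (⌊a * (n + 1 : ℕ)⌋₊ : ℝ) / (n + 1 : ℕ)) atTop (nhds a) :=
  (tendsto_nat_floor_mul_div_atTop ha).comp
    (tendsto_natCast_atTop_atTop.comp (tendsto_add_atTop_nat 1))

theorem smul_latticePt (c : ℝ) (p : ℤ × ℤ) : c • latticePt p = !₂[c * p.1, c * p.2] := by
  ext i
  fin_cases i <;> simp [latticePt]

theorem sortedNormTriple_equilateral :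
    sortedNormTriple 0 !₂[2, 0] !₂[1, Real.sqrt 3] = (2/3, 2/3, 2/3) := by
  have h4 : Real.sqrt 4 = 2 := by
    rw [show (4:ℝ) = 2 ^ 2 by norm_num, Real.sqrt_sq (by norm_num)]
  refine sortedNormTriple_of_norm_eq (d := 2) two_ne_zero ?_ ?_ ?_
  all_goals
    simp only [EuclideanSpace.norm_eq, Fin.sum_univ_two]
    norm_num [h4]

/-- There is a sequence of lattice triangles whose sorted normalized
side-length triples converge to `(2/3, 2/3, 2/3)`, the point of the moduli
space representing the equilateral triangle. -/
theorem stmt_6 :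
    ∃ A B C : ℕ → ℤ × ℤ,
      (∀ n, ¬ Collinear ℝ
        ({latticePt (A n), latticePt (B n), latticePt (C n)} :
          Set (EuclideanSpace ℝ (Fin 2)))) ∧
      Tendsto
        (fun n => sortedNormTriple (latticePt (A n)) (latticePt (B n)) (latticePt (C n)))
        atTop (nhds (2/3, 2/3, 2/3)) := by
  have hsqrt3 : 0 ≤ Real.sqrt 3 := Real.sqrt_nonneg 3
  refine ⟨fun _ => (0, 0), fun n => (2 * (n + 1 : ℕ), 0),
    fun n => ((n + 1 : ℕ), ⌊Real.sqrt 3 * (n + 1 : ℕ)⌋₊), fun n => ?_, ?_⟩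
  · refine not_collinear_latticePt (by positivity) ?_
    have : 1 ≤ Real.sqrt 3 * (n + 1 : ℕ) :=
      one_le_mul_of_one_le_of_one_le (Real.one_le_sqrt.mpr (by norm_num)) (by simp)
    exact_mod_cast (Nat.floor_pos.mpr this).ne'
  · have hrescale : ∀ n : ℕ,
        sortedNormTriple (latticePt (0, 0)) (latticePt (2 * (n + 1 : ℕ), 0))
            (latticePt ((n + 1 : ℕ), ⌊Real.sqrt 3 * (n + 1 : ℕ)⌋₊)) =
          sortedNormTriple 0 !₂[2, 0]
            !₂[1, (⌊Real.sqrt 3 * (n + 1 : ℕ)⌋₊ : ℝ) / (n + 1 : ℕ)] := by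
      intro n
      have hn : ((n + 1 : ℕ) : ℝ) ≠ 0 := by positivity
      rw [← sortedNormTriple_smul (inv_ne_zero hn)]
      simp only [smul_latticePt]
      congr 2 <;> ext i <;> fin_cases i <;> simp <;> field_simp
    simp only [hrescale]
    rw [← sortedNormTriple_equilateral]
    refine tendsto_const_nhds.sortedNormTriple tendsto_const_nhds
      (tendsto_toLp_pair tendsto_const_nhds (tendsto_nat_floor_mul_div_succ hsqrt3)) ?_
    intro h
    simpa using congrArg (· 0) h
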